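/- Let v₁,…,v_m be distinct nonsink vertices of Γ, and let p_{ik}, q_{ik}, p'_{is}, q'_{it} be paths of length ≥ 1 in Γ all ending at v_i, such that for each i the p'_{is} are distinct, the q'_{it} are distinct, and the pairs (p_{ik}, q_{ik}) are distinct. Then the elements p_{ik}·CK(v_i)'·q_{ik}*, p'_{is}·CK(v_i)', CK(v_i)'·(q'_{it})*, and CK(v_i)' are linearly independent in the Cohn algebra C(Γ). -/

import Mathlib

/-!
The Cohn algebra acts on the vector space with basis the pairs `(w, m)`, read as (possibly
ill-formed) paths `w --m-->`: vertices project, edges prepend, ghost edges remove a first edge.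
On genuine paths `CK(v)'` is the projection onto the trivial path `v`, so for paths `p`, `q`
ending at `v` the element `p CK(v)' q*` sends `q` to `p` and every other path to `0`. Evaluating
at `q` and reading off the coefficient of `p` therefore gives a dual family, and linear
independence follows. The four families of the statement are of this form, with trivial paths
where `p` or `q` is missing, because `CK(v)' = v CK(v)' = CK(v)' v`.
-/

open scoped Classical

/-- A (row-finite) directed graph. -/
structure DGraph : Type 1 where
  V : Type
  E : Type
  src : E → V
  rng : E → V

namespace DGraph

variable (G : DGraph)

/-- `Chain u l w` : the list of edges `l` forms a path from `u` to `w`. -/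
inductive Chain : G.V → List G.E → G.V → Prop
  | nil (v : G.V) : Chain v [] v
  | cons {e : G.E} {u : G.V} {l : List G.E} {w : G.V} :
      G.src e = u → Chain (G.rng e) l w → Chain u (e :: l) w

/-- Generators of the Cohn algebra: vertices, edges and ghost edges. -/
inductive Gen : Type
  | vert : G.V → Gen
  | edge : G.E → Gen
  | ghost : G.E → Gen

variable (F : Type) [Field F]

/-- Shorthand for the canonical generators of the free algebra. -/
noncomputable abbrev gi (x : G.Gen) : FreeAlgebra F G.Gen := FreeAlgebra.ι F x

/-- The defining relations of the Cohn algebra of a graph. -/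
inductive CohnRel : FreeAlgebra F G.Gen → FreeAlgebra F G.Gen → Prop
  | idem (v : G.V) : CohnRel (gi G F (.vert v) * gi G F (.vert v)) (gi G F (.vert v))
  | orth {v w : G.V} (h : v ≠ w) : CohnRel (gi G F (.vert v) * gi G F (.vert w)) 0
  | src_edge (e : G.E) : CohnRel (gi G F (.vert (G.src e)) * gi G F (.edge e)) (gi G F (.edge e))
  | edge_rng (e : G.E) : CohnRel (gi G F (.edge e) * gi G F (.vert (G.rng e))) (gi G F (.edge e))
  | ghost_src (e : G.E) : CohnRel (gi G F (.ghost e) * gi G F (.vert (G.src e))) (gi G F (.ghost e))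
  | rng_ghost (e : G.E) : CohnRel (gi G F (.vert (G.rng e)) * gi G F (.ghost e)) (gi G F (.ghost e))
  | ghost_edge_ne {e f : G.E} (h : e ≠ f) : CohnRel (gi G F (.ghost e) * gi G F (.edge f)) 0
  | ghost_edge (e : G.E) : CohnRel (gi G F (.ghost e) * gi G F (.edge e)) (gi G F (.vert (G.rng e)))

/-- The Cohn algebra of the graph `G` over the field `F`. -/
noncomputable abbrev CohnAlgebra := RingQuot (G.CohnRel F)

noncomputable def cvert (v : G.V) : G.CohnAlgebra F :=
  RingQuot.mkAlgHom F (G.CohnRel F) (gi G F (.vert v))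

noncomputable def cedge (e : G.E) : G.CohnAlgebra F :=
  RingQuot.mkAlgHom F (G.CohnRel F) (gi G F (.edge e))

noncomputable def cghost (e : G.E) : G.CohnAlgebra F :=
  RingQuot.mkAlgHom F (G.CohnRel F) (gi G F (.ghost e))

/-- The element of the Cohn algebra corresponding to the path starting at `u`
with list of edges `l` (for `l = []` this is the vertex `u`). -/
noncomputable def cpath (u : G.V) (l : List G.E) : G.CohnAlgebra F :=
  G.cvert F u * (l.map (G.cedge F)).prod

/-- The ghost path `p*` corresponding to the path starting at `u` with edges `l`. -/
noncomputable def cstar (u : G.V) (l : List G.E) : G.CohnAlgebra F :=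
  ((l.reverse).map (G.cghost F)).prod * G.cvert F u

/-- A vertex is a nonsink if some edge starts there. -/
def NonSink (v : G.V) : Prop := ∃ e : G.E, G.src e = v

/-- `CK(v)' = v - ∑_{s(e)=v} e e*`. -/
noncomputable def ckp [∀ v : G.V, Fintype {e : G.E // G.src e = v}] (v : G.V) :
    G.CohnAlgebra F :=
  G.cvert F v - ∑ e : {e : G.E // G.src e = v}, G.cedge F e.1 * G.cghost F e.1

/-- The defining relations of the Leavitt path algebra: the Cohn relations together with
the Cuntz-Krieger relations at nonsink vertices. -/
inductive LeavittRel [∀ v : G.V, Fintype {e : G.E // G.src e = v}] :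
    FreeAlgebra F G.Gen → FreeAlgebra F G.Gen → Prop
  | cohn {x y : FreeAlgebra F G.Gen} : G.CohnRel F x y → LeavittRel x y
  | ck (v : G.V) (h : G.NonSink v) :
      LeavittRel (∑ e : {e : G.E // G.src e = v}, gi G F (.edge e.1) * gi G F (.ghost e.1))
        (gi G F (.vert v))

/-- The Leavitt path algebra of the row-finite graph `G` over `F`. -/
noncomputable abbrev Leavitt [∀ v : G.V, Fintype {e : G.E // G.src e = v}] :=
  RingQuot (G.LeavittRel F)

noncomputable def lvert [∀ v : G.V, Fintype {e : G.E // G.src e = v}] (v : G.V) :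
    G.Leavitt F := RingQuot.mkAlgHom F (G.LeavittRel F) (gi G F (.vert v))

noncomputable def ledge [∀ v : G.V, Fintype {e : G.E // G.src e = v}] (e : G.E) :
    G.Leavitt F := RingQuot.mkAlgHom F (G.LeavittRel F) (gi G F (.edge e))

noncomputable def lghost [∀ v : G.V, Fintype {e : G.E // G.src e = v}] (e : G.E) :
    G.Leavitt F := RingQuot.mkAlgHom F (G.LeavittRel F) (gi G F (.ghost e))

noncomputable def lpath [∀ v : G.V, Fintype {e : G.E // G.src e = v}] (u : G.V)
    (l : List G.E) : G.Leavitt F :=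
  G.lvert F u * (l.map (G.ledge F)).prod

noncomputable def lstar [∀ v : G.V, Fintype {e : G.E // G.src e = v}] (u : G.V)
    (l : List G.E) : G.Leavitt F :=
  ((l.reverse).map (G.lghost F)).prod * G.lvert F u

end DGraph

namespace DGraph

variable {G : DGraph}

theorem Chain.target_unique {u w w' : G.V} {l : List G.E}
    (h : G.Chain u l w) (h' : G.Chain u l w') : w = w' := by
  induction h generalizing w' with
  | nil v => cases h'; rfl
  | cons _ _ ih => cases h' with | cons _ hc' => exact ih hc'

section Relations

variable {F : Type} [Field F]

theorem cvert_mul_self (v : G.V) : G.cvert F v * G.cvert F v = G.cvert F v := by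
  simpa [cvert] using RingQuot.mkAlgHom_rel F (CohnRel.idem (G := G) (F := F) v)

theorem cvert_src_mul_cedge (e : G.E) : G.cvert F (G.src e) * G.cedge F e = G.cedge F e := by
  simpa [cvert, cedge] using RingQuot.mkAlgHom_rel F (CohnRel.src_edge (G := G) (F := F) e)

theorem cedge_mul_cvert_rng (e : G.E) : G.cedge F e * G.cvert F (G.rng e) = G.cedge F e := by
  simpa [cvert, cedge] using RingQuot.mkAlgHom_rel F (CohnRel.edge_rng (G := G) (F := F) e)

theorem cghost_mul_cvert_src (e : G.E) :
    G.cghost F e * G.cvert F (G.src e) = G.cghost F e := by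
  simpa [cvert, cghost] using RingQuot.mkAlgHom_rel F (CohnRel.ghost_src (G := G) (F := F) e)

theorem cvert_rng_mul_cghost (e : G.E) :
    G.cvert F (G.rng e) * G.cghost F e = G.cghost F e := by
  simpa [cvert, cghost] using RingQuot.mkAlgHom_rel F (CohnRel.rng_ghost (G := G) (F := F) e)

theorem cpath_nil (u : G.V) : G.cpath F u [] = G.cvert F u := by
  simp [cpath]

theorem cstar_nil (u : G.V) : G.cstar F u [] = G.cvert F u := by
  simp [cstar]

theorem cpath_cons {e : G.E} (l : List G.E) :
    G.cpath F (G.src e) (e :: l) = G.cedge F e * G.cpath F (G.rng e) l := by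
  simp only [cpath, List.map_cons, List.prod_cons, ← mul_assoc, cvert_src_mul_cedge,
    cedge_mul_cvert_rng]

theorem cstar_cons {e : G.E} (l : List G.E) :
    G.cstar F (G.src e) (e :: l) = G.cstar F (G.rng e) l * G.cghost F e := by
  simp only [cstar, List.reverse_cons, List.map_append, List.prod_append, List.map_cons,
    List.map_nil, List.prod_cons, List.prod_nil, mul_one, mul_assoc, cghost_mul_cvert_src,
    cvert_rng_mul_cghost]

variable [∀ v : G.V, Fintype {e : G.E // G.src e = v}]

theorem cvert_mul_ckp (v : G.V) : G.cvert F v * G.ckp F v = G.ckp F v := by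
  rw [ckp, mul_sub, cvert_mul_self, Finset.mul_sum]
  congr 1
  refine Finset.sum_congr rfl fun ⟨e, he⟩ _ => ?_
  subst he
  rw [← mul_assoc, cvert_src_mul_cedge]

theorem ckp_mul_cvert (v : G.V) : G.ckp F v * G.cvert F v = G.ckp F v := by
  rw [ckp, sub_mul, cvert_mul_self, Finset.sum_mul]
  congr 1
  refine Finset.sum_congr rfl fun ⟨e, he⟩ _ => ?_
  subst he
  rw [mul_assoc, cghost_mul_cvert_src]

end Relations

section PathRepresentation

variable (F : Type) [Field F]

noncomputable def genImage : G.Gen → G.V × List G.E → (G.V × List G.E) →₀ F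
  | .vert v, (w, m) => if w = v then Finsupp.single (w, m) 1 else 0
  | .edge e, (w, m) => if w = G.rng e then Finsupp.single (G.src e, e :: m) 1 else 0
  | .ghost e, (w, m) =>
      if m.head? = some e ∧ w = G.src e then Finsupp.single (G.rng e, m.tail) 1 else 0

noncomputable def genOp (x : G.Gen) : Module.End F ((G.V × List G.E) →₀ F) :=
  Finsupp.linearCombination F (genImage F x)

variable {F}

theorem genOp_respects_cohnRel {x y : FreeAlgebra F G.Gen} (h : G.CohnRel F x y) :
    FreeAlgebra.lift F (genOp F) x = FreeAlgebra.lift F (genOp F) y := by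
  cases h <;>
  · simp only [map_mul, map_zero, FreeAlgebra.lift_ι_apply]
    refine Finsupp.basisSingleOne.ext fun ⟨w, m⟩ => ?_
    simp only [Finsupp.coe_basisSingleOne, Module.End.mul_apply, genOp,
      Finsupp.linearCombination_single, one_smul, genImage, LinearMap.zero_apply]
    split_ifs <;> simp_all [genImage, eq_comm]

noncomputable def pathRep : G.CohnAlgebra F →ₐ[F] Module.End F ((G.V × List G.E) →₀ F) :=
  RingQuot.liftAlgHom F ⟨FreeAlgebra.lift F (genOp F), fun _ _ => genOp_respects_cohnRel⟩

end PathRepresentation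

section Action

variable {F : Type} [Field F]

open Finsupp

theorem pathRep_cvert_single (v w : G.V) (m : List G.E) :
    pathRep (G.cvert F v) (single (w, m) 1) = if w = v then single (w, m) 1 else 0 := by
  simp [pathRep, cvert, genOp, genImage]

theorem pathRep_cedge_single (e : G.E) (w : G.V) (m : List G.E) :
    pathRep (G.cedge F e) (single (w, m) 1) =
      if w = G.rng e then single (G.src e, e :: m) 1 else 0 := by
  simp [pathRep, cedge, genOp, genImage]

theorem pathRep_cghost_single (e : G.E) (w : G.V) (m : List G.E) :
    pathRep (G.cghost F e) (single (w, m) 1) =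
      if m.head? = some e ∧ w = G.src e then single (G.rng e, m.tail) 1 else 0 := by
  simp [pathRep, cghost, genOp, genImage]

theorem pathRep_cpath_single {u w : G.V} {l : List G.E} (h : G.Chain u l w) (m : List G.E) :
    pathRep (G.cpath F u l) (single (w, m) 1) = single (u, l ++ m) 1 := by
  induction h with
  | nil v => simp [cpath_nil, pathRep_cvert_single]
  | cons hs _ ih =>
    subst hs
    simp [cpath_cons, ih, pathRep_cedge_single]

theorem pathRep_cedge_mul_cghost_single (e : G.E) (w : G.V) (m : List G.E) :
    pathRep (G.cedge F e * G.cghost F e) (single (w, m) 1) =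
      if m.head? = some e ∧ w = G.src e then single (w, m) 1 else 0 := by
  rw [map_mul, Module.End.mul_apply, pathRep_cghost_single]
  split_ifs with h
  · obtain ⟨hm, rfl⟩ := h
    obtain ⟨m, rfl⟩ : ∃ m', m = e :: m' := ⟨m.tail, (List.cons_head?_tail hm).symm⟩
    simp [pathRep_cedge_single]
  · exact map_zero _

variable [∀ v : G.V, Fintype {e : G.E // G.src e = v}]

theorem pathRep_ckp_single {v w z : G.V} {m : List G.E} (hm : G.Chain w m z) :
    pathRep (G.ckp F v) (single (w, m) 1) =
      if (w, m) = (v, []) then single (v, []) 1 else 0 := by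
  rw [ckp, map_sub, map_sum, LinearMap.sub_apply, LinearMap.sum_apply, pathRep_cvert_single]
  simp only [pathRep_cedge_mul_cghost_single]
  cases hm with
  | nil => by_cases hw : w = v <;> simp [hw]
  | @cons e _ _ _ hs _ =>
    by_cases hw : w = v
    · subst hw
      rw [Fintype.sum_eq_single ⟨e, hs⟩ fun f hf =>
        if_neg fun h => hf (Subtype.ext (by simpa using h.1.symm))]
      simp [hs]
    · rw [Finset.sum_eq_zero fun f _ => if_neg fun h => hw (h.2.trans f.2)]
      simp [hw]

theorem pathRep_ckp_mul_cstar_single {u v w z : G.V} {q m : List G.E} (hq : G.Chain u q v)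
    (hm : G.Chain w m z) :
    pathRep (G.ckp F v * G.cstar F u q) (single (w, m) 1) =
      if (w, m) = (u, q) then single (v, []) 1 else 0 := by
  induction hq generalizing w m z with
  | nil v =>
    rw [cstar_nil, map_mul, Module.End.mul_apply, pathRep_cvert_single]
    by_cases hw : w = v
    · subst hw
      simp [pathRep_ckp_single hm]
    · simp [hw]
  | @cons e _ q _ hs _ ih =>
    subst hs
    rw [cstar_cons, ← mul_assoc, map_mul, Module.End.mul_apply, pathRep_cghost_single]
    by_cases h : m.head? = some e ∧ w = G.src e
    · obtain ⟨hm', rfl⟩ := h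
      obtain ⟨m, rfl⟩ : ∃ m', m = e :: m' := ⟨m.tail, (List.cons_head?_tail hm').symm⟩
      cases hm with
      | cons _ hm =>
        rw [if_pos ⟨hm', rfl⟩, List.tail_cons, ih hm]
        simp
    · rw [if_neg h, map_zero, if_neg]
      rintro ⟨⟩
      exact h ⟨rfl, rfl⟩

end Action

@[ext]
structure PathPair (G : DGraph) where
  p : G.V × List G.E
  q : G.V × List G.E
  v : G.V
  chain_p : G.Chain p.1 p.2 v
  chain_q : G.Chain q.1 q.2 v

namespace PathPair

variable {p q : G.V × List G.E} {v : G.V}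

def ofLeft (h : G.Chain p.1 p.2 v) : G.PathPair := ⟨p, (v, []), v, h, .nil v⟩

def ofRight (h : G.Chain q.1 q.2 v) : G.PathPair := ⟨(v, []), q, v, .nil v, h⟩

def ofVertex (v : G.V) : G.PathPair := ⟨(v, []), (v, []), v, .nil v, .nil v⟩

variable (F : Type) [Field F] [∀ v : G.V, Fintype {e : G.E // G.src e = v}]

noncomputable def elem (x : G.PathPair) : G.CohnAlgebra F :=
  G.cpath F x.p.1 x.p.2 * G.ckp F x.v * G.cstar F x.q.1 x.q.2

noncomputable def coord (x : G.PathPair) : Module.Dual F (G.CohnAlgebra F) :=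
  Finsupp.lapply x.p ∘ₗ LinearMap.applyₗ (Finsupp.single x.q 1) ∘ₗ pathRep.toLinearMap

variable {F}

theorem pathRep_elem_single (x : G.PathPair) {w z : G.V} {m : List G.E} (hm : G.Chain w m z) :
    pathRep (x.elem F) (Finsupp.single (w, m) 1) =
      if (w, m) = x.q then Finsupp.single x.p 1 else 0 := by
  rw [elem, mul_assoc, map_mul, Module.End.mul_apply, pathRep_ckp_mul_cstar_single x.chain_q hm]
  split_ifs
  · simpa using pathRep_cpath_single (F := F) x.chain_p []
  · exact map_zero _

theorem coord_elem (x y : G.PathPair) : x.coord F (y.elem F) = if x = y then 1 else 0 := by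
  have h := y.pathRep_elem_single (F := F) x.chain_q
  simp only [coord, LinearMap.coe_comp, Function.comp_apply, AlgHom.toLinearMap_apply,
    LinearMap.applyₗ_apply_apply, Finsupp.lapply_apply, h]
  by_cases hxy : x = y
  · simp [hxy]
  rw [if_neg hxy]
  split_ifs with hq
  · rw [Finsupp.single_apply, if_neg]
    intro hp
    have hv : x.v = y.v := x.chain_q.target_unique (by simpa [← hq] using y.chain_q)
    exact hxy (PathPair.ext hp.symm hq hv)
  · rfl

theorem elem_ofLeft (h : G.Chain p.1 p.2 v) :
    (ofLeft h).elem F = G.cpath F p.1 p.2 * G.ckp F v := by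
  rw [ofLeft, elem, cstar_nil, mul_assoc, ckp_mul_cvert]

theorem elem_ofRight (h : G.Chain q.1 q.2 v) :
    (ofRight h).elem F = G.ckp F v * G.cstar F q.1 q.2 := by
  rw [ofRight, elem, cpath_nil, cvert_mul_ckp]

theorem elem_ofVertex (v : G.V) : (ofVertex v).elem F = G.ckp F v := by
  rw [ofVertex, elem, cpath_nil, cstar_nil, cvert_mul_ckp, ckp_mul_cvert]

end PathPair

theorem linearIndependent_pathPair_elem (F : Type) [Field F]
    [∀ v : G.V, Fintype {e : G.E // G.src e = v}] :
    LinearIndependent F (PathPair.elem F : G.PathPair → G.CohnAlgebra F) :=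
  .of_pairwise_dual_eq_zero_one _ (PathPair.coord F)
    (fun x y hxy => by simp [PathPair.coord_elem, hxy]) (fun x => by simp [PathPair.coord_elem])

end DGraph

open DGraph

/-- Let `v_i` (`i ∈ ι`) be distinct nonsink vertices of `Γ` and let
`p_{ik}, q_{ik}` (`k ∈ K₁`), `p'_{is}` (`s ∈ K₂`), `q'_{it}` (`t ∈ K₃`) be paths of
length ≥ 1 ending at the corresponding `v_i`, such that for each `i` the `p'_{is}` are
distinct, the `q'_{it}` are distinct, and the pairs `(p_{ik}, q_{ik})` are distinct.
Then the elements `p_{ik}·CK(v_i)'·q_{ik}*`, `p'_{is}·CK(v_i)'`, `CK(v_i)'·(q'_{it})*`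
and `CK(v_i)'` are linearly independent in `C(Γ)`. -/
theorem stmt6 (G : DGraph) (F : Type) [Field F]
    [∀ v : G.V, Fintype {e : G.E // G.src e = v}]
    (ι : Type) (vs : ι → G.V) (hvs : Function.Injective vs)
    (hns : ∀ i : ι, G.NonSink (vs i))
    (K₁ K₂ K₃ : Type)
    (i₁ : K₁ → ι) (p₁ q₁ : K₁ → G.V × List G.E)
    (i₂ : K₂ → ι) (p₂ : K₂ → G.V × List G.E)
    (i₃ : K₃ → ι) (q₃ : K₃ → G.V × List G.E)
    -- the paths are paths of `Γ` ending at the corresponding `v_i`, of length ≥ 1: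
    (hp₁ : ∀ k, G.Chain (p₁ k).1 (p₁ k).2 (vs (i₁ k)) ∧ (p₁ k).2 ≠ [])
    (hq₁ : ∀ k, G.Chain (q₁ k).1 (q₁ k).2 (vs (i₁ k)) ∧ (q₁ k).2 ≠ [])
    (hp₂ : ∀ k, G.Chain (p₂ k).1 (p₂ k).2 (vs (i₂ k)) ∧ (p₂ k).2 ≠ [])
    (hq₃ : ∀ k, G.Chain (q₃ k).1 (q₃ k).2 (vs (i₃ k)) ∧ (q₃ k).2 ≠ [])
    -- distinctness assumptions:
    (hd₁ : Function.Injective (fun k => (i₁ k, p₁ k, q₁ k)))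
    (hd₂ : Function.Injective (fun k => (i₂ k, p₂ k)))
    (hd₃ : Function.Injective (fun k => (i₃ k, q₃ k))) :
    LinearIndependent F
      (Sum.elim
        (fun k : K₁ =>
          G.cpath F (p₁ k).1 (p₁ k).2 * G.ckp F (vs (i₁ k)) * G.cstar F (q₁ k).1 (q₁ k).2)
        (Sum.elim
          (fun k : K₂ => G.cpath F (p₂ k).1 (p₂ k).2 * G.ckp F (vs (i₂ k)))
          (Sum.elim
            (fun k : K₃ => G.ckp F (vs (i₃ k)) * G.cstar F (q₃ k).1 (q₃ k).2)
            (fun i : ι => G.ckp F (vs i))))) := by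
  let pair : K₁ ⊕ K₂ ⊕ K₃ ⊕ ι → G.PathPair :=
    Sum.elim (fun k => ⟨p₁ k, q₁ k, vs (i₁ k), (hp₁ k).1, (hq₁ k).1⟩)
      (Sum.elim (fun k => .ofLeft (hp₂ k).1)
        (Sum.elim (fun k => .ofRight (hq₃ k).1) (fun i => .ofVertex (vs i))))
  -- the four blocks are told apart by which of the two paths is trivial
  have hinj : Function.Injective pair := by
    rintro (a | a | a | a) (b | b | b | b) h <;>
      simp only [pair, Sum.elim_inl, Sum.elim_inr, PathPair.ofLeft, PathPair.ofRight,
        PathPair.ofVertex, PathPair.mk.injEq, hvs.eq_iff] at h <;>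
      simp_all [Prod.ext_iff, ← hd₁.eq_iff, ← hd₂.eq_iff, ← hd₃.eq_iff]
  convert (linearIndependent_pathPair_elem F).comp pair hinj using 1
  funext x
  rcases x with k | k | k | i
  · rfl
  · exact (PathPair.elem_ofLeft _).symm
  · exact (PathPair.elem_ofRight _).symm
  · exact (PathPair.elem_ofVertex _).symm
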